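/- Let U be a finite type, let f : Finset U → ℝ be a submodular set function with f(∅) ≥ 0, and let F : [0,1]^U → ℝ be its extension by expectation. Then for every x ∈ [0,1]^U and every λ ∈ [0,1], F(λ·x) ≥ λ·F(x). -/

import Mathlib

/-!
Along the ray `t ↦ F(t • x)` the extension is concave, which gives
`F(λ • x) ≥ λ F(x) + (1 - λ) F(0) = λ F(x) + (1 - λ) f(∅)`, and `f(∅) ≥ 0` finishes.
This chord inequality is proved by induction on the ground set: splitting off a coordinate `a`
writes the extension of `f` as the `(1 - x a, x a)`-mixture of the extensions of `f` and of its
contraction `S ↦ f (insert a S)` on the remaining coordinates, and submodularity bounds the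
contraction by `f + (f {a} - f ∅)`.
-/

/-- The extension by expectation (multilinear extension) of a set function. -/
noncomputable def mulExt {U : Type*} [Fintype U] [DecidableEq U]
    (f : Finset U → ℝ) (y : U → ℝ) : ℝ :=
  ∑ R : Finset U, f R * ((∏ i ∈ R, y i) * ∏ i ∈ Rᶜ, (1 - y i))

open Finset

def IsSubmodular {U : Type*} [DecidableEq U] (f : Finset U → ℝ) : Prop :=
  ∀ S T : Finset U, f (S ∪ T) + f (S ∩ T) ≤ f S + f T

namespace IsSubmodular

variable {U : Type*} [DecidableEq U] {f : Finset U → ℝ}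

theorem comp_insert (hf : IsSubmodular f) (a : U) : IsSubmodular fun S => f (insert a S) := by
  intro S T
  simpa only [← insert_union_distrib, ← insert_inter_distrib] using hf (insert a S) (insert a T)

theorem apply_insert_le (hf : IsSubmodular f) {a : U} {R : Finset U} (ha : a ∉ R) :
    f (insert a R) ≤ f R + (f {a} - f ∅) := by
  have h := hf {a} R
  rw [singleton_union, singleton_inter_of_notMem ha] at h
  linarith

end IsSubmodular

section mulExtOn

variable {U : Type*} [DecidableEq U]

noncomputable def mulExtOn (f : Finset U → ℝ) (V : Finset U) (y : U → ℝ) : ℝ :=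
  ∑ R ∈ V.powerset, f R * ((∏ i ∈ R, y i) * ∏ i ∈ V \ R, (1 - y i))

theorem sum_powerset_prod_mul_prod_sdiff_one_sub (V : Finset U) (y : U → ℝ) :
    ∑ R ∈ V.powerset, (∏ i ∈ R, y i) * ∏ i ∈ V \ R, (1 - y i) = 1 := by
  rw [← prod_add]
  simp

theorem mulExtOn_empty (f : Finset U → ℝ) (y : U → ℝ) : mulExtOn f ∅ y = f ∅ := by
  simp [mulExtOn]

theorem mulExtOn_insert (f : Finset U → ℝ) {V : Finset U} {a : U} (ha : a ∉ V) (y : U → ℝ) :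
    mulExtOn f (insert a V) y
      = (1 - y a) * mulExtOn f V y + y a * mulExtOn (fun S => f (insert a S)) V y := by
  rw [mulExtOn, sum_powerset_insert ha, mulExtOn, mulExtOn, mul_sum, mul_sum]
  congr 1 <;> refine sum_congr rfl fun R hR => ?_
  · have haR : a ∉ R := fun h => ha (mem_powerset.mp hR h)
    rw [insert_sdiff_of_notMem _ haR, prod_insert (fun h => ha (mem_sdiff.mp h).1)]
    ring
  · rw [insert_sdiff_insert, sdiff_insert_of_notMem ha,
      prod_insert fun h => ha (mem_powerset.mp hR h)]
    ring

theorem mulExtOn_add_const (f : Finset U → ℝ) (c : ℝ) (V : Finset U) (y : U → ℝ) :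
    mulExtOn (fun S => f S + c) V y = mulExtOn f V y + c := by
  simp only [mulExtOn, add_mul, sum_add_distrib, ← mul_sum,
    sum_powerset_prod_mul_prod_sdiff_one_sub, mul_one]

theorem mulExtOn_mono {f g : Finset U → ℝ} {V : Finset U} {y : U → ℝ}
    (hy : ∀ i, y i ∈ Set.Icc (0 : ℝ) 1) (hfg : ∀ S ⊆ V, f S ≤ g S) :
    mulExtOn f V y ≤ mulExtOn g V y := by
  refine sum_le_sum fun R hR => mul_le_mul_of_nonneg_right (hfg R (mem_powerset.mp hR)) ?_
  exact mul_nonneg (prod_nonneg fun i _ => (hy i).1)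
    (prod_nonneg fun i _ => sub_nonneg.mpr (hy i).2)

theorem IsSubmodular.mulExtOn_comp_insert_le {f : Finset U → ℝ} (hf : IsSubmodular f)
    {V : Finset U} {a : U} (ha : a ∉ V) {y : U → ℝ} (hy : ∀ i, y i ∈ Set.Icc (0 : ℝ) 1) :
    mulExtOn (fun S => f (insert a S)) V y ≤ mulExtOn f V y + (f {a} - f ∅) := by
  rw [← mulExtOn_add_const]
  exact mulExtOn_mono hy fun S hS => hf.apply_insert_le fun h => ha (hS h)

theorem IsSubmodular.le_mulExtOn_const_mul {f : Finset U → ℝ} (hf : IsSubmodular f) (V : Finset U)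
    {x : U → ℝ} (hx : ∀ i, x i ∈ Set.Icc (0 : ℝ) 1) {lam : ℝ} (hlam : lam ∈ Set.Icc (0 : ℝ) 1) :
    lam * mulExtOn f V x + (1 - lam) * f ∅ ≤ mulExtOn f V (fun i => lam * x i) := by
  induction V using Finset.induction_on generalizing f with
  | empty => rw [mulExtOn_empty, mulExtOn_empty]; linarith
  | @insert a V ha ih =>
    have hA := ih (hf.comp_insert a)
    have hB := ih hf
    have hAB := hf.mulExtOn_comp_insert_le ha hx
    simp only [insert_empty] at hA
    rw [mulExtOn_insert f ha, mulExtOn_insert f ha]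
    obtain ⟨hl0, hl1⟩ := hlam
    obtain ⟨hxa0, hxa1⟩ := hx a
    -- The slack is `lam * x a * (1 - lam)` times the (nonnegative) slack of `hAB`.
    have hA' := mul_le_mul_of_nonneg_left hA (mul_nonneg hl0 hxa0)
    have hB' := mul_le_mul_of_nonneg_left hB (by nlinarith : 0 ≤ 1 - lam * x a)
    have hAB' := mul_le_mul_of_nonneg_left hAB
      (mul_nonneg (mul_nonneg hl0 (sub_nonneg.mpr hl1)) hxa0)
    linarith

end mulExtOn

theorem mulExt_eq_mulExtOn_univ {U : Type*} [Fintype U] [DecidableEq U]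
    (f : Finset U → ℝ) (y : U → ℝ) : mulExt f y = mulExtOn f univ y := by
  simp only [mulExt, mulExtOn, powerset_univ, compl_eq_univ_sdiff]

theorem mulExt_scaling_lower_bound
    {U : Type*} [Fintype U] [DecidableEq U] (f : Finset U → ℝ)
    (hsub : ∀ S T : Finset U, f (S ∪ T) + f (S ∩ T) ≤ f S + f T)
    (hempty : 0 ≤ f ∅)
    (x : U → ℝ) (hx : ∀ i, x i ∈ Set.Icc (0 : ℝ) 1)
    (lam : ℝ) (hlam : lam ∈ Set.Icc (0 : ℝ) 1) :
    lam * mulExt f x ≤ mulExt f (fun i => lam * x i) := by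
  have hconcave := IsSubmodular.le_mulExtOn_const_mul hsub univ hx hlam
  rw [mulExt_eq_mulExtOn_univ, mulExt_eq_mulExtOn_univ]
  nlinarith [hlam.2]
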